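/- In DL_3(q), with α_n the vertex having l_1(α_n) = m_2(α_n) = n (all other coordinates 0, upward edges in T_1 labeled 1) and β_n the vertex with m_3(β_n) = l_3(β_n) = n (all other coordinates 0, upward edges labeled 1), one has d(β_n, α_n) = 2n = d(β_n, id) for every n. -/

import Mathlib

open Finset

/-- A vertex of the oriented (q+1)-valent tree `T` underlying Diestel–Leader graphs:
descend `m` edges from the basepoint `o` along its ancestor ray (whose edges all
carry the label `0`), then ascend along the edge labels listed in `w`.
The normalization condition (if `m ≠ 0`, the first label of `w` is not `0`)
makes this representation unique. -/
structure TreeVertex (q : ℕ) where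
  m : ℕ
  w : List (Fin q)
  norm : ∀ a t, m ≠ 0 → w = a :: t → (a : ℕ) ≠ 0

namespace TreeVertex

variable {q : ℕ}

/-- the basepoint `o` of the tree -/
def o (q : ℕ) : TreeVertex q := ⟨0, [], fun _ _ h _ => absurd rfl h⟩

/-- `l v = d(v, o ⋏ v)` -/
def l (v : TreeVertex q) : ℕ := v.w.length

/-- the height function `h = l - m` -/
def h (v : TreeVertex q) : ℤ := (v.l : ℤ) - (v.m : ℤ)

/-- length of the longest common prefix of two lists -/
def cpl : List (Fin q) → List (Fin q) → ℕ
  | a :: s, b :: t => if a = b then cpl s t + 1 else 0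
  | _, _ => 0

/-- `mPair x y = d(x, x ⋏ y)`, the distance from `x` to the greatest common
ancestor of `x` and `y`. -/
def mPair (x y : TreeVertex q) : ℕ :=
  if x.m < y.m then x.l + (y.m - x.m)
  else if y.m < x.m then x.l
  else x.l - cpl x.w y.w

/-- the graph distance in the tree -/
def dist (x y : TreeVertex q) : ℕ := mPair x y + mPair y x

end TreeVertex

/-- The Diestel–Leader graph `DL_d(q)`: `d`-tuples of tree vertices whose heights
sum to `0`. -/
structure DL (d q : ℕ) where
  t : Fin d → TreeVertex q
  hsum : ∑ i, (t i).h = 0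

namespace DL

variable {d q : ℕ}

/-- the basepoint `id` of `DL_d(q)` -/
def id0 (d q : ℕ) : DL d q :=
  ⟨fun _ => TreeVertex.o q, by simp [TreeVertex.h, TreeVertex.o, TreeVertex.l]⟩

/-- the pairwise coordinate `m_i(x,y) = d_i(p_i x, p_i x ⋏ p_i y)` -/
def mm (x y : DL d q) (i : Fin d) : ℕ := TreeVertex.mPair (x.t i) (y.t i)

/-- the pairwise coordinate `l_i(x,y) = d_i(p_i y, p_i x ⋏ p_i y)` -/
def ll (x y : DL d q) (i : Fin d) : ℕ := TreeVertex.mPair (y.t i) (x.t i)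

/-- the coordinate `m_i(x)` -/
def mc (x : DL d q) (i : Fin d) : ℕ := (x.t i).m

/-- the coordinate `l_i(x)` -/
def lc (x : DL d q) (i : Fin d) : ℕ := (x.t i).l

/-- the height coordinate `h_i(x) = l_i(x) - m_i(x)` -/
def hc (x : DL d q) (i : Fin d) : ℤ := (x.t i).h

/-- The Stein–Taback quantity `f_{σ,i}` (here `i` is 1-based, `2 ≤ i ≤ d`):
`f_{σ,i} = m_{σ(1)} + ⋯ + m_{σ(i)} + l_{σ(i)} + ⋯ + l_{σ(d)}` for `2 ≤ i ≤ d-1`,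
and `f_{σ,d} = 2m_{σ(1)} + m_{σ(2)} + ⋯ + m_{σ(d)} + l_{σ(d)}`. -/
def fST {d : ℕ} (m l : Fin d → ℕ) (σ : Equiv.Perm (Fin d)) (i : ℕ) : ℕ :=
  if i = d then
    (∑ j, m (σ j)) + (∑ j ∈ univ.filter fun j : Fin d => (j : ℕ) = 0, m (σ j))
      + (∑ j ∈ univ.filter fun j : Fin d => (j : ℕ) = d - 1, l (σ j))
  else
    (∑ j ∈ univ.filter fun j : Fin d => (j : ℕ) + 1 ≤ i, m (σ j))
      + (∑ j ∈ univ.filter fun j : Fin d => i ≤ (j : ℕ) + 1, l (σ j))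

/-- The distance on `DL_d(q)`, via the Stein–Taback formula
`d(x,y) = min_{σ ∈ Σ_d} max_{2 ≤ i ≤ d} f_{σ,i}(x,y)`. -/
noncomputable def dist (x y : DL d q) : ℕ :=
  ⨅ σ : Equiv.Perm (Fin d), ⨆ i ∈ Finset.Icc 2 d, fST (mm x y) (ll x y) σ i

end DL

namespace DL3

/-- the label `1` (requires `2 ≤ q`) -/
def one (q : ℕ) (hq : 2 ≤ q) : Fin q := ⟨1, by omega⟩

/-- the tree vertex at depth `k` obtained by descending `k` edges from `o` and
ascending `k` edges all labeled `1`; it satisfies `m = l = k`, `h = 0`. -/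
def ray (q : ℕ) (hq : 2 ≤ q) (k : ℕ) : TreeVertex q :=
  ⟨k, List.replicate k (one q hq), by
    intro a t _ hw
    cases k with
    | zero => simp at hw
    | succ n =>
      rw [List.replicate_succ] at hw
      have : a = one q hq := (List.cons.injEq _ _ _ _).mp hw |>.1.symm
      simp [this, one]⟩

/-- the point `ζ^i_k ∈ DL_3(q)`: `m_i = l_i = k` (upward edges labeled `1`),
all other coordinates trivial -/
def zeta (q : ℕ) (hq : 2 ≤ q) (i : Fin 3) (k : ℕ) : DL 3 q :=
  ⟨fun j => if j = i then ray q hq k else TreeVertex.o q, by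
    have h0 : ∀ j : Fin 3, ((if j = i then ray q hq k else TreeVertex.o q) : TreeVertex q).h = 0 := by
      intro j
      split <;> simp [TreeVertex.h, TreeVertex.l, ray, TreeVertex.o]
    simp [h0]⟩

/-- the sequence `β_n`: `m_3(β_n) = l_3(β_n) = n` along edges labeled `1`,
trivial in the first two trees -/
def beta (q : ℕ) (hq : 2 ≤ q) (n : ℕ) : DL 3 q := zeta q hq 2 n

/-- the sequence `α_n`: `l_1(α_n) = n` (upward edges labeled `1`),
`m_2(α_n) = n`, all other coordinates trivial -/
def alpha (q : ℕ) (hq : 2 ≤ q) (n : ℕ) : DL 3 q :=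
  ⟨![⟨0, List.replicate n (one q hq), fun _ _ h _ => absurd rfl h⟩,
     ⟨n, [], by intro a t _ hw; simp at hw⟩,
     TreeVertex.o q], by
    simp [Fin.sum_univ_three, TreeVertex.h, TreeVertex.l, TreeVertex.o]⟩

/-- the point `ν^{j,ε}_k` (`j ∈ {1,2}`): ascend `k` edges labeled `ε` in tree `j`,
descend `k` edges in tree `3`; so `l_j = k`, `m_3 = k`, all else trivial. -/
def nu (q : ℕ) (j : Fin 2) (ε : Fin q) (k : ℕ) : DL 3 q :=
  ⟨fun i =>
      if i = Fin.castLE (by omega) j then ⟨0, List.replicate k ε, fun _ _ h _ => absurd rfl h⟩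
      else if i = 2 then ⟨k, [], by intro a t _ hw; simp at hw⟩
      else TreeVertex.o q, by
    rw [Fin.sum_univ_three]
    fin_cases j <;>
      simp [TreeVertex.h, TreeVertex.l, TreeVertex.o, Fin.ext_iff]⟩

/-- the horofunction `β` of `DL_3(q)`:
`β(z) = m_1 + m_2 + min_{j=1,2} {m_j + h_3, h_j + h_3, l_j}` -/
def betaFn {q : ℕ} (w : DL 3 q) : ℤ :=
  (DL.mc w 0 : ℤ) + DL.mc w 1 +
    min ((DL.mc w 0 : ℤ) + DL.hc w 2)
      (min (DL.hc w 0 + DL.hc w 2)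
        (min (DL.lc w 0 : ℤ)
          (min ((DL.mc w 1 : ℤ) + DL.hc w 2)
            (min (DL.hc w 1 + DL.hc w 2) (DL.lc w 1 : ℤ)))))

end DL3

open DL3

/-!
For `d = 3` the Stein–Taback quantity `f_{σ,3}` dominates `m_1 + m_2 + m_3`, and whichever
position `σ` gives to a tree `i`, one of `f_{σ,2}`, `f_{σ,3}` dominates `m_i + min m_i l_i`.
For `(β_n, α_n)` the pairwise coordinates are `m = (0, n, n)`, `l = (n, 0, n)`, so the first
bound gives `2n`, attained by `σ = (2 3)`; for `(β_n, id)` they are `m = l = (0, 0, n)`, so the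
second bound in the third tree gives `2n`, attained by `σ = id`.
-/

namespace TreeVertex

variable {q : ℕ}

@[simp]
lemma l_o : (o q).l = 0 := rfl

@[simp]
lemma mPair_o_left (v : TreeVertex q) : mPair (o q) v = v.m := by
  unfold mPair
  split_ifs <;> simp_all [o, l]

@[simp]
lemma mPair_o_right (v : TreeVertex q) : mPair v (o q) = v.l := by
  have hcpl : cpl v.w [] = 0 := by cases v.w <;> rfl
  unfold mPair
  split_ifs <;> simp_all [o]

end TreeVertex

namespace DL

lemma iSup_mem_Icc_two_three (f : ℕ → ℕ) : (⨆ i ∈ Icc 2 3, f i) = max (f 2) (f 3) := by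
  rw [ciSup_eq_max'_image _ ⟨2, by decide, by simp⟩ (by simp)]
  have hIcc : Icc 2 3 = {2, 3} := by decide
  simp [hIcc, max'_insert]

lemma fST_two (m l : Fin 3 → ℕ) (σ : Equiv.Perm (Fin 3)) :
    fST m l σ 2 = m (σ 0) + m (σ 1) + (l (σ 1) + l (σ 2)) := by
  simp [fST, sum_filter, Fin.sum_univ_three]

lemma fST_three (m l : Fin 3 → ℕ) (σ : Equiv.Perm (Fin 3)) :
    fST m l σ 3 = m (σ 0) + m (σ 1) + m (σ 2) + m (σ 0) + l (σ 2) := by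
  simp [fST, sum_filter, Fin.sum_univ_three]

lemma sum_le_fST_three (m l : Fin 3 → ℕ) (σ : Equiv.Perm (Fin 3)) :
    ∑ i, m i ≤ fST m l σ 3 := by
  rw [fST_three, ← Equiv.sum_comp σ m, Fin.sum_univ_three]
  omega

lemma add_min_le_max_fST (m l : Fin 3 → ℕ) (σ : Equiv.Perm (Fin 3)) (i : Fin 3) :
    m i + min (m i) (l i) ≤ max (fST m l σ 2) (fST m l σ 3) := by
  obtain ⟨j, rfl⟩ := σ.surjective i
  rw [fST_two, fST_three]
  fin_cases j <;> simp <;> omega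

variable {q : ℕ}

lemma dist_eq_iInf_max (x y : DL 3 q) :
    dist x y = ⨅ σ, max (fST (mm x y) (ll x y) σ 2) (fST (mm x y) (ll x y) σ 3) := by
  simp only [dist, iSup_mem_Icc_two_three]

lemma dist_le_max_fST (x y : DL 3 q) (σ : Equiv.Perm (Fin 3)) :
    dist x y ≤ max (fST (mm x y) (ll x y) σ 2) (fST (mm x y) (ll x y) σ 3) :=
  (dist_eq_iInf_max x y).symm ▸ ciInf_le (OrderBot.bddBelow _) σ

lemma le_dist_of_forall_le_max_fST (x y : DL 3 q) {c : ℕ}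
    (h : ∀ σ, c ≤ max (fST (mm x y) (ll x y) σ 2) (fST (mm x y) (ll x y) σ 3)) :
    c ≤ dist x y :=
  (dist_eq_iInf_max x y).symm ▸ le_ciInf h

lemma sum_mm_le_dist (x y : DL 3 q) : ∑ i, mm x y i ≤ dist x y :=
  le_dist_of_forall_le_max_fST x y fun σ => (sum_le_fST_three _ _ σ).trans (le_max_right _ _)

lemma mm_add_min_ll_le_dist (x y : DL 3 q) (i : Fin 3) :
    mm x y i + min (mm x y i) (ll x y i) ≤ dist x y :=
  le_dist_of_forall_le_max_fST x y fun σ => add_min_le_max_fST _ _ σ i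

end DL

namespace DL3

variable {q : ℕ} (hq : 2 ≤ q) (n : ℕ)

@[simp]
lemma ray_m (k : ℕ) : (ray q hq k).m = k := rfl

@[simp]
lemma ray_l (k : ℕ) : (ray q hq k).l = k := List.length_replicate

lemma mm_beta_alpha : DL.mm (beta q hq n) (alpha q hq n) = ![0, n, n] := by
  ext i; fin_cases i <;> simp [DL.mm, beta, alpha, zeta, ray, TreeVertex.l]

lemma ll_beta_alpha : DL.ll (beta q hq n) (alpha q hq n) = ![n, 0, n] := by
  ext i; fin_cases i <;> simp [DL.ll, beta, alpha, zeta, ray, TreeVertex.l]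

lemma mm_beta_id0 : DL.mm (beta q hq n) (DL.id0 3 q) = ![0, 0, n] := by
  ext i; fin_cases i <;> simp [DL.mm, DL.id0, beta, zeta]

lemma ll_beta_id0 : DL.ll (beta q hq n) (DL.id0 3 q) = ![0, 0, n] := by
  ext i; fin_cases i <;> simp [DL.ll, DL.id0, beta, zeta]

end DL3

/-- In `DL_3(q)`, with `α_n` the vertex having
`l_1(α_n) = m_2(α_n) = n` (all other coordinates `0`, upward edges in `T_1`
labeled `1`) and `β_n` the vertex with `m_3(β_n) = l_3(β_n) = n` (all other
coordinates `0`, upward edges labeled `1`), one has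
`d(β_n, α_n) = 2n = d(β_n, id)` for every `n`. -/
theorem dist_beta_alpha {q : ℕ} (hq : 2 ≤ q) (n : ℕ) :
    DL.dist (beta q hq n) (alpha q hq n) = 2 * n ∧
    DL.dist (beta q hq n) (DL.id0 3 q) = 2 * n := by
  constructor
  · apply le_antisymm
    · simpa [DL.fST_two, DL.fST_three, mm_beta_alpha, ll_beta_alpha, Equiv.swap_apply_of_ne_of_ne,
        two_mul] using DL.dist_le_max_fST (beta q hq n) (alpha q hq n) (Equiv.swap 1 2)
    · simpa [mm_beta_alpha, Fin.sum_univ_three, two_mul] using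
        DL.sum_mm_le_dist (beta q hq n) (alpha q hq n)
  · apply le_antisymm
    · simpa [DL.fST_two, DL.fST_three, mm_beta_id0, ll_beta_id0, two_mul] using
        DL.dist_le_max_fST (beta q hq n) (DL.id0 3 q) 1
    · simpa [mm_beta_id0, ll_beta_id0, two_mul] using
        DL.mm_add_min_ll_le_dist (beta q hq n) (DL.id0 3 q) 2
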